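/- arXiv:2206.03975 — 3 statements merged into one kernel-verified Lean document; each statement's English description precedes it below -/
import Mathlib

section
/- For any real numbers 0 ≤ α ≤ β with β > 0 and any λ > 0, sup over positive integers i of i^{-α}/(i^{-β} + λ) is at most λ^{(α-β)/β}. -/
/-- For 0 ≤ α ≤ β with β > 0 and λ > 0,
`sup_{i ∈ ℕ, i ≥ 1} i^{-α}/(i^{-β} + λ) ≤ λ^{(α-β)/β}`. -/
theorem stmt_2 (α β lam : ℝ) (hα : 0 ≤ α) (hαβ : α ≤ β) (hβ : 0 < β) (hlam : 0 < lam) :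
    ∀ i : ℕ, 0 < i → ((i : ℝ) ^ (-α)) / ((i : ℝ) ^ (-β) + lam) ≤ lam ^ ((α - β) / β) := by
  intro i hi
  have hx : (0:ℝ) < i := by exact_mod_cast hi
  set t := (i:ℝ) ^ (-β) with ht
  have htpos : 0 < t := Real.rpow_pos_of_pos hx _
  have hdenom : 0 < t + lam := by linarith
  have hs0 : 0 ≤ α / β := div_nonneg hα hβ.le
  have hs1 : α / β ≤ 1 := by rw [div_le_one hβ]; exact hαβ
  have hkey : (i:ℝ) ^ (-α) = t ^ (α / β) := by
    rw [ht, ← Real.rpow_mul hx.le]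
    congr 1
    field_simp
  have hexp : (α - β) / β = α / β - 1 := by field_simp
  have hteq : t ^ (α / β) = t ^ (α / β - 1) * t := by
    rw [show α / β = (α / β - 1) + 1 by ring, Real.rpow_add_one htpos.ne']
    ring_nf
  have hleq : lam ^ (α / β) = lam ^ (α / β - 1) * lam := by
    rw [show α / β = (α / β - 1) + 1 by ring, Real.rpow_add_one hlam.ne']
    ring_nf
  rw [hkey, hexp, div_le_iff₀ hdenom]
  have hlpos := Real.rpow_pos_of_pos hlam (α / β - 1)
  rcases le_total t lam with h | h
  · have h1 : t ^ (α / β) ≤ lam ^ (α / β) := Real.rpow_le_rpow htpos.le h hs0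
    nlinarith
  · have h1 : t ^ (α / β - 1) ≤ lam ^ (α / β - 1) :=
      Real.rpow_le_rpow_of_nonpos hlam h (by linarith)
    nlinarith [Real.rpow_pos_of_pos htpos (α / β - 1)]
end

section
/- Let β ≥ α > 1 and γ ≥ α/β with λ > 0. Then ∑_{i=1}^∞ i^{-α}/(i^{-β}+λ)^γ ≤ λ^{-(1+βγ-α)/β} · 2^{1-α/β} · ∫_0^∞ dy/(1+y^α). -/
open MeasureTheory


lemma aux_concave {q a : ℝ} (hq0 : 0 ≤ q) (hq1 : q ≤ 1) (ha : 0 ≤ a) :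
    1 + a ^ q ≤ 2 ^ (1 - q) * (1 + a) ^ q := by
  have h := (Real.concaveOn_rpow hq0 hq1).2 (Set.mem_Ici.mpr zero_le_one)
    (Set.mem_Ici.mpr ha) (by norm_num : (0:ℝ) ≤ 1/2) (by norm_num : (0:ℝ) ≤ 1/2)
    (by norm_num : (1/2 : ℝ) + 1/2 = 1)
  simp only [smul_eq_mul, Real.one_rpow, mul_one] at h
  have h2 : (1/2 + 1/2 * a : ℝ) = (1+a)/2 := by ring
  rw [h2, Real.div_rpow (by linarith) (by norm_num)] at h
  have hpos : (0:ℝ) < 2 ^ q := Real.rpow_pos_of_pos two_pos q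
  rw [Real.rpow_sub two_pos, Real.rpow_one]
  rw [le_div_iff₀ hpos] at h
  rw [div_mul_eq_mul_div, le_div_iff₀ hpos]
  nlinarith [h]

lemma aux_key {α β γ lam : ℝ} (hα : 0 < α) (hβ : 0 < β) (hαβ : α ≤ β) (hγ : α / β ≤ γ)
    (hlam : 0 < lam) {t : ℝ} (ht : 0 < t) :
    t ^ (-α) / (t ^ (-β) + lam) ^ γ ≤
      lam ^ (α / β - γ) * 2 ^ (1 - α / β) * (1 + (lam ^ (1 / β) * t) ^ α)⁻¹ := by
  set q : ℝ := α / β with hqdef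
  have hq0 : 0 < q := div_pos hα hβ
  have hq1 : q ≤ 1 := (div_le_one hβ).mpr hαβ
  set c : ℝ := lam ^ (1 / β) with hcdef
  have hc : 0 < c := Real.rpow_pos_of_pos hlam _
  set A : ℝ := t ^ (-β) + lam with hAdef
  have hA : 0 < A := by
    have := Real.rpow_pos_of_pos ht (-β); positivity
  have hu : 0 ≤ c * t := by positivity
  have hcβ : c ^ β = lam := by
    rw [hcdef, ← Real.rpow_mul hlam.le, one_div_mul_cancel hβ.ne', Real.rpow_one]
  -- step 1 : denominator lower bound
  have h1 : lam ^ (γ - q) * A ^ q ≤ A ^ γ := by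
    have : lam ^ (γ - q) ≤ A ^ (γ - q) :=
      Real.rpow_le_rpow hlam.le (le_add_of_nonneg_left (Real.rpow_nonneg ht.le _))
        (sub_nonneg.mpr hγ)
    calc lam ^ (γ - q) * A ^ q ≤ A ^ (γ - q) * A ^ q := by
          exact mul_le_mul_of_nonneg_right this (Real.rpow_nonneg hA.le _)
      _ = A ^ γ := by rw [← Real.rpow_add hA]; ring_nf
  -- step 2 : product identity
  have h2 : t ^ (-α) * A ^ (-q) = (1 + (c * t) ^ β) ^ (-q) := by
    have htβ : t ^ (-α) = (t ^ β) ^ (-q) := by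
      rw [← Real.rpow_mul ht.le]
      congr 1
      rw [hqdef]
      field_simp
    rw [htβ, ← Real.mul_rpow (Real.rpow_nonneg ht.le _) hA.le]
    congr 1
    rw [hAdef, mul_add, ← Real.rpow_add ht, add_neg_cancel, Real.rpow_zero,
      Real.mul_rpow hc.le ht.le, hcβ]
    ring
  -- step 3 : concavity bound
  have h3 : (1 + (c * t) ^ β) ^ (-q) ≤ 2 ^ (1 - q) * (1 + (c * t) ^ α)⁻¹ := by
    have hbβ : (0:ℝ) < 1 + (c * t) ^ β := by
      have := Real.rpow_nonneg hu β; linarith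
    have huα : ((c * t) ^ β) ^ q = (c * t) ^ α := by
      rw [← Real.rpow_mul hu]
      congr 1
      rw [hqdef]
      field_simp
    have hcon : 1 + (c * t) ^ α ≤ 2 ^ (1 - q) * (1 + (c * t) ^ β) ^ q := by
      have := aux_concave hq0.le hq1 (Real.rpow_nonneg hu β)
      rwa [huα] at this
    have hX : (0:ℝ) < (1 + (c * t) ^ β) ^ q := Real.rpow_pos_of_pos hbβ _
    have hY : (0:ℝ) < 1 + (c * t) ^ α := by
      have := Real.rpow_nonneg hu α; linarith
    have h2q : (0:ℝ) < 2 ^ (1 - q) := Real.rpow_pos_of_pos two_pos _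
    rw [Real.rpow_neg hbβ.le]
    rw [inv_le_iff_one_le_mul₀ hX,
      show 2 ^ (1 - q) * (1 + (c * t) ^ α)⁻¹ * (1 + (c * t) ^ β) ^ q
        = 2 ^ (1 - q) * (1 + (c * t) ^ β) ^ q * (1 + (c * t) ^ α)⁻¹ by ring,
      ← div_eq_mul_inv, le_div_iff₀ hY, one_mul]
    exact hcon
  -- combine
  have hlamp : (0:ℝ) < lam ^ (γ - q) := Real.rpow_pos_of_pos hlam _
  have hAq : (0:ℝ) < A ^ q := Real.rpow_pos_of_pos hA _
  calc t ^ (-α) / A ^ γ ≤ t ^ (-α) / (lam ^ (γ - q) * A ^ q) := by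
        apply div_le_div_of_nonneg_left (Real.rpow_nonneg ht.le _) (by positivity) h1
    _ = lam ^ (q - γ) * (t ^ (-α) * A ^ (-q)) := by
        rw [show q - γ = -(γ - q) by ring, Real.rpow_neg hlam.le, Real.rpow_neg hA.le,
          div_eq_mul_inv, mul_inv]
        ring
    _ = lam ^ (q - γ) * (1 + (c * t) ^ β) ^ (-q) := by rw [h2]
    _ ≤ lam ^ (q - γ) * (2 ^ (1 - q) * (1 + (c * t) ^ α)⁻¹) := by
        exact mul_le_mul_of_nonneg_left h3 (Real.rpow_nonneg hlam.le _)
    _ = lam ^ (q - γ) * 2 ^ (1 - q) * (1 + (c * t) ^ α)⁻¹ := by ring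
    _ = lam ^ (α / β - γ) * 2 ^ (1 - α / β) * (1 + (c * t) ^ α)⁻¹ := by rw [hqdef]

lemma aux_integrable {α : ℝ} (hα : 1 < α) :
    MeasureTheory.IntegrableOn (fun y : ℝ => (1 + y ^ α)⁻¹) (Set.Ioi 0) := by
  have hm : Measurable fun y : ℝ => (1 + y ^ α)⁻¹ :=
    ((continuous_const.add (Real.continuous_rpow_const (by linarith))).measurable).inv
  have h1 : MeasureTheory.IntegrableOn (fun y : ℝ => (1 + y ^ α)⁻¹) (Set.Ioc 0 1) := by
    apply MeasureTheory.Measure.integrableOn_of_bounded (M := 1)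
    · simp
    · exact hm.aestronglyMeasurable
    · filter_upwards [ae_restrict_mem measurableSet_Ioc] with y hy
      have hy0 : (0:ℝ) < y := hy.1
      have : (0:ℝ) ≤ y ^ α := Real.rpow_nonneg hy0.le α
      rw [Real.norm_eq_abs, abs_of_nonneg (by positivity)]
      rw [inv_le_one_iff₀]; right; linarith
  have h2 : MeasureTheory.IntegrableOn (fun y : ℝ => (1 + y ^ α)⁻¹) (Set.Ioi 1) := by
    apply MeasureTheory.Integrable.mono
      (integrableOn_Ioi_rpow_of_lt (by linarith : -α < -1) one_pos)
      hm.aestronglyMeasurable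
    filter_upwards [ae_restrict_mem measurableSet_Ioi] with y hy
    have hy0 : (0:ℝ) < y := lt_trans one_pos hy
    have hyα : (0:ℝ) < y ^ α := Real.rpow_pos_of_pos hy0 α
    rw [Real.norm_eq_abs, Real.norm_eq_abs, abs_of_nonneg (by positivity),
      abs_of_nonneg (Real.rpow_nonneg hy0.le _), Real.rpow_neg hy0.le]
    exact inv_anti₀ hyα (by linarith)
  have := h1.union h2
  rwa [Set.Ioc_union_Ioi_eq_Ioi zero_le_one] at this


/-- For β ≥ α > 1, γ ≥ α/β and λ > 0,
`∑_{i≥1} i^{-α}/(i^{-β}+λ)^γ ≤ λ^{-(1+βγ-α)/β} · 2^{1-α/β} · ∫_0^∞ (1+y^α)⁻¹ dy`. -/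
theorem stmt_4 (α β γ lam : ℝ) (hα : 1 < α) (hαβ : α ≤ β) (hγ : α / β ≤ γ) (hlam : 0 < lam) :
    ∑' i : ℕ+, ((i : ℝ) ^ (-α)) / (((i : ℝ) ^ (-β) + lam) ^ γ) ≤
      lam ^ (-(1 + β * γ - α) / β) * (2 : ℝ) ^ (1 - α / β) *
        ∫ y in Set.Ioi (0 : ℝ), (1 + y ^ α)⁻¹ := by
  have hα0 : (0:ℝ) < α := lt_trans one_pos hα
  have hβ : (0:ℝ) < β := lt_of_lt_of_le hα0 hαβ
  set c : ℝ := lam ^ (1 / β) with hcdef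
  have hc : 0 < c := Real.rpow_pos_of_pos hlam _
  set I : ℝ := ∫ y in Set.Ioi (0 : ℝ), (1 + y ^ α)⁻¹ with hIdef
  have hInt : IntegrableOn (fun y : ℝ => (1 + y ^ α)⁻¹) (Set.Ioi 0) := aux_integrable hα
  have hg : IntegrableOn (fun y : ℝ => (1 + (c * y) ^ α)⁻¹) (Set.Ioi 0) := by
    have := (integrableOn_Ioi_comp_mul_left_iff (fun y : ℝ => (1 + y ^ α)⁻¹) 0 hc).mpr
    rw [mul_zero] at this
    exact this hInt
  have hgval : ∫ y in Set.Ioi (0:ℝ), (1 + (c * y) ^ α)⁻¹ = c⁻¹ * I := by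
    have := integral_comp_mul_left_Ioi (fun y : ℝ => (1 + y ^ α)⁻¹) 0 hc
    rw [mul_zero] at this
    rw [this, smul_eq_mul, hIdef]
  have hI0 : 0 ≤ I := setIntegral_nonneg measurableSet_Ioi fun y hy => by
    have h1 : (0:ℝ) ≤ y ^ α := Real.rpow_nonneg (le_of_lt hy) _
    positivity
  set K : ℝ := lam ^ (α / β - γ) * 2 ^ (1 - α / β) with hKdef
  have hK0 : (0:ℝ) ≤ K := by
    have := Real.rpow_nonneg hlam.le (α / β - γ)
    have := Real.rpow_nonneg (by norm_num : (0:ℝ) ≤ 2) (1 - α / β)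
    rw [hKdef]; positivity
  have hconst : lam ^ (-(1 + β * γ - α) / β) * (2:ℝ) ^ (1 - α / β) = K * c⁻¹ := by
    have hcinv : c⁻¹ = lam ^ (-(1 / β)) := by
      rw [hcdef, ← Real.rpow_neg hlam.le]
    rw [hKdef, hcinv, mul_right_comm, ← Real.rpow_add hlam]
    congr 2
    field_simp
    ring
  have hRHS0 : 0 ≤ lam ^ (-(1 + β * γ - α) / β) * (2:ℝ) ^ (1 - α / β) * I := by
    rw [hconst]
    positivity
  rw [← Equiv.tsum_eq (Equiv.pnatEquivNat.symm)
    (fun i : ℕ+ => ((i : ℝ) ^ (-α)) / (((i : ℝ) ^ (-β) + lam) ^ γ))]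
  have hcast : ∀ n : ℕ, ((Equiv.pnatEquivNat.symm n : ℕ+) : ℝ) = (n : ℝ) + 1 := by
    intro n
    simp [Equiv.pnatEquivNat, Nat.succPNat]
  apply tsum_le_of_sum_le' hRHS0
  intro s
  obtain ⟨N, hN⟩ := s.exists_nat_subset_range
  have hterm_nonneg : ∀ n : ℕ,
      0 ≤ ((Equiv.pnatEquivNat.symm n : ℕ+) : ℝ) ^ (-α) /
        ((((Equiv.pnatEquivNat.symm n : ℕ+) : ℝ)) ^ (-β) + lam) ^ γ := by
    intro n
    rw [hcast n]
    have h1 : (0:ℝ) ≤ ((n:ℝ) + 1) ^ (-α) := Real.rpow_nonneg (by positivity) _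
    have h2 : (0:ℝ) ≤ (((n:ℝ) + 1) ^ (-β) + lam) ^ γ :=
      Real.rpow_nonneg (by have := Real.rpow_nonneg (by positivity : (0:ℝ) ≤ (n:ℝ)+1) (-β); linarith) _
    positivity
  calc ∑ n ∈ s, ((Equiv.pnatEquivNat.symm n : ℕ+) : ℝ) ^ (-α) /
        ((((Equiv.pnatEquivNat.symm n : ℕ+) : ℝ)) ^ (-β) + lam) ^ γ
      ≤ ∑ n ∈ Finset.range N, ((Equiv.pnatEquivNat.symm n : ℕ+) : ℝ) ^ (-α) /
        ((((Equiv.pnatEquivNat.symm n : ℕ+) : ℝ)) ^ (-β) + lam) ^ γ :=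
        Finset.sum_le_sum_of_subset_of_nonneg hN fun n _ _ => hterm_nonneg n
    _ ≤ ∑ n ∈ Finset.range N, K * (1 + (c * ((n:ℝ) + 1)) ^ α)⁻¹ := by
        apply Finset.sum_le_sum
        intro n _
        rw [hcast n]
        exact aux_key hα0 hβ hαβ hγ hlam (by positivity)
    _ = K * ∑ n ∈ Finset.range N, (1 + (c * ((n:ℝ) + 1)) ^ α)⁻¹ := by
        rw [Finset.mul_sum]
    _ ≤ K * ∫ y in Set.Ioi (0:ℝ), (1 + (c * y) ^ α)⁻¹ := by
        apply mul_le_mul_of_nonneg_left _ hK0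
        have hanti : AntitoneOn (fun y : ℝ => (1 + (c * y) ^ α)⁻¹)
            (Set.Icc (0:ℝ) (0 + (N:ℝ))) := by
          intro x hx y hy hxy
          have hx0 : (0:ℝ) ≤ x := hx.1
          have hcx : (0:ℝ) ≤ c * x := by positivity
          have hle : (c * x) ^ α ≤ (c * y) ^ α :=
            Real.rpow_le_rpow hcx (mul_le_mul_of_nonneg_left hxy hc.le) hα0.le
          have hpos : (0:ℝ) < 1 + (c * x) ^ α := by
            have := Real.rpow_nonneg hcx α; linarith
          exact inv_anti₀ hpos (by linarith)
        have hsum := hanti.sum_le_integral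
        have hsum' : ∑ n ∈ Finset.range N, (1 + (c * ((n:ℝ) + 1)) ^ α)⁻¹ ≤
            ∫ x in (0:ℝ)..(0 + (N:ℝ)), (1 + (c * x) ^ α)⁻¹ := by
          refine le_trans (le_of_eq ?_) hsum
          apply Finset.sum_congr rfl
          intro n _
          push_cast
          ring_nf
        refine hsum'.trans ?_
        rw [intervalIntegral.integral_of_le (by positivity)]
        apply setIntegral_mono_set hg
        · filter_upwards [ae_restrict_mem measurableSet_Ioi] with y hy
          have hy' : (0:ℝ) < y := hy
          have : (0:ℝ) ≤ (c * y) ^ α := Real.rpow_nonneg (by positivity) _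
          positivity
        · exact (Set.Ioc_subset_Ioi_self).eventuallyLE
    _ = lam ^ (-(1 + β * γ - α) / β) * (2:ℝ) ^ (1 - α / β) * I := by
        rw [hgval, hconst]; ring
end

section
/- Let A and Â be positive self-adjoint bounded operators on a Hilbert space and λ > 0. If ‖(A+λI)^{-1/2}(A−Â)(A+λI)^{-1/2}‖ ≤ 1/2, then ‖(A+λI)^{1/2}(Â+λI)^{-1/2}‖² ≤ 1/(1−‖(A+λI)^{-1/2}(A−Â)(A+λI)^{-1/2}‖) ≤ 2. -/
/-!
Put `E = S⁻¹(A - Â)S⁻¹`. Since `S² - Ŝ² = A - Â`, we get `1 - E = S⁻¹Ŝ²S⁻¹`, so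
`X = (SŜ⁻¹)(Ŝ⁻¹S)` is a left inverse of `1 - E`. The identity `X = 1 + XE` gives
`‖X‖ ≤ 1 + ‖X‖‖E‖`, i.e. the Neumann bound `‖X‖ ≤ (1 - ‖E‖)⁻¹`, and the C⋆-identity turns
`‖X‖` into `‖SŜ⁻¹‖²` because `S` and `Ŝ⁻¹` are self-adjoint.
-/

theorem IsSelfAdjoint.of_mul_eq_one {R : Type*} [Monoid R] [StarMul R] {a b : R}
    (ha : IsSelfAdjoint a) (hab : a * b = 1) : IsSelfAdjoint b := by
  have hleft : star b * a = 1 := by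
    simpa only [star_mul, ha.star_eq, star_one] using congrArg star hab
  exact left_inv_eq_right_inv hleft hab

theorem norm_le_div_one_sub_of_mul_one_sub_eq_one {R : Type*} [NormedRing R] {x e : R}
    (h : x * (1 - e) = 1) (he : ‖e‖ < 1) : ‖x‖ ≤ ‖(1 : R)‖ / (1 - ‖e‖) := by
  have hx : x = 1 + x * e := by
    rw [mul_sub, mul_one, sub_eq_iff_eq_add] at h
    exact h
  have hbound : ‖x‖ ≤ ‖(1 : R)‖ + ‖x‖ * ‖e‖ :=
    calc ‖x‖ = ‖1 + x * e‖ := congrArg norm hx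
      _ ≤ ‖(1 : R)‖ + ‖x * e‖ := norm_add_le _ _
      _ ≤ ‖(1 : R)‖ + ‖x‖ * ‖e‖ := by gcongr; exact norm_mul_le x e
  rw [le_div_iff₀ (by linarith)]
  linarith

theorem mul_mul_one_sub_conj_eq_one {R : Type*} [Ring R] {S Sinv T Tinv D : R}
    (hS : S * Sinv = 1 ∧ Sinv * S = 1) (hT : Tinv * T = 1) (hD : S * S - T * T = D) :
    S * Tinv * (Tinv * S) * (1 - Sinv * D * Sinv) = 1 := by
  have hconj : 1 - Sinv * D * Sinv = Sinv * (T * T) * Sinv := by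
    have hone : (1 : R) = Sinv * (S * S) * Sinv := by
      rw [← mul_assoc, hS.2, one_mul, hS.1]
    rw [← hD, hone]
    noncomm_ring
  rw [hconj]
  simp only [mul_assoc]
  rw [← mul_assoc S Sinv, hS.1, one_mul, ← mul_assoc Tinv T, hT, one_mul, ← mul_assoc Tinv T, hT,
    one_mul, hS.1]

theorem stmt_17_general {H : Type*} [NormedAddCommGroup H] [InnerProductSpace ℂ H] [CompleteSpace H]
    (A Ah : H →L[ℂ] H) (lam : ℝ)
    (S Sh Sinv Shinv : H →L[ℂ] H)
    (hSpos : S.IsPositive) (hS : S * S = A + (lam : ℂ) • (1 : H →L[ℂ] H))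
    (hShpos : Sh.IsPositive) (hSh : Sh * Sh = Ah + (lam : ℂ) • (1 : H →L[ℂ] H))
    (hSinv : S * Sinv = 1 ∧ Sinv * S = 1)
    (hShinv : Sh * Shinv = 1 ∧ Shinv * Sh = 1)
    (hsmall : ‖Sinv * (A - Ah) * Sinv‖ ≤ 1 / 2) :
    ‖S * Shinv‖ ^ 2 ≤ (1 - ‖Sinv * (A - Ah) * Sinv‖)⁻¹ ∧ ‖S * Shinv‖ ^ 2 ≤ 2 := by
  set ε := ‖Sinv * (A - Ah) * Sinv‖
  have hstar : star (S * Shinv) = Shinv * S := by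
    rw [star_mul, hSpos.isSelfAdjoint.star_eq,
      (hShpos.isSelfAdjoint.of_mul_eq_one hShinv.1).star_eq]
  have hnorm : ‖S * Shinv‖ ^ 2 = ‖S * Shinv * (Shinv * S)‖ := by
    rw [← hstar, CStarRing.norm_self_mul_star, sq]
  have hinv := mul_mul_one_sub_conj_eq_one hSinv hShinv.2
    (show S * S - Sh * Sh = A - Ah by rw [hS, hSh]; abel)
  have hneumann := norm_le_div_one_sub_of_mul_one_sub_eq_one hinv (by linarith)
  have hε : 0 < 1 - ε := by linarith
  have hbound : ‖S * Shinv‖ ^ 2 ≤ (1 - ε)⁻¹ := by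
    rw [hnorm, inv_eq_one_div]
    exact hneumann.trans (div_le_div_of_nonneg_right ContinuousLinearMap.norm_id_le hε.le)
  refine ⟨hbound, hbound.trans ?_⟩
  rw [inv_le_comm₀ hε two_pos]
  linarith

/-- Let A, Â be positive self-adjoint bounded operators on a Hilbert space, λ > 0, with
S = (A+λI)^{1/2}, Ŝ = (Â+λI)^{1/2} (the positive square roots), Sinv = S⁻¹, Ŝinv = Ŝ⁻¹.
If `‖S⁻¹(A−Â)S⁻¹‖ ≤ 1/2` then
`‖(A+λI)^{1/2}(Â+λI)^{-1/2}‖² ≤ 1/(1−‖S⁻¹(A−Â)S⁻¹‖) ≤ 2`. -/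
theorem stmt_17 {H : Type*} [NormedAddCommGroup H] [InnerProductSpace ℂ H] [CompleteSpace H]
    (A Ah : H →L[ℂ] H) (hA : A.IsPositive) (hAh : Ah.IsPositive) (lam : ℝ) (hlam : 0 < lam)
    (S Sh Sinv Shinv : H →L[ℂ] H)
    (hSpos : S.IsPositive) (hS : S * S = A + (lam : ℂ) • (1 : H →L[ℂ] H))
    (hShpos : Sh.IsPositive) (hSh : Sh * Sh = Ah + (lam : ℂ) • (1 : H →L[ℂ] H))
    (hSinv : S * Sinv = 1 ∧ Sinv * S = 1)
    (hShinv : Sh * Shinv = 1 ∧ Shinv * Sh = 1)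
    (hsmall : ‖Sinv * (A - Ah) * Sinv‖ ≤ 1 / 2) :
    ‖S * Shinv‖ ^ 2 ≤ (1 - ‖Sinv * (A - Ah) * Sinv‖)⁻¹ ∧ ‖S * Shinv‖ ^ 2 ≤ 2 :=
  stmt_17_general A Ah lam S Sh Sinv Shinv hSpos hS hShpos hSh hSinv hShinv hsmall
end
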